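/- Let λ, t be real numbers with 0.5 ≤ λ ≤ 0.8194 and 2.8 ≤ t ≤ 5.78. Then the function m ↦ F(λ, t, m) is monotone nondecreasing on the interval (1, ∞); that is, for all real m₂ ≥ m₁ > 1, F(λ, t, m₂) ≥ F(λ, t, m₁), where F(λ,t,m) = λ·(−1 + (t−3π/2)²/2 − (t−3π/2)⁴/24) + (−1 + (λt−3π/2)²/2 − (λt−3π/2)⁴/24) + λ(1−λ²)·(1 + 1/(m²−1))·(t − t³/(6m²) + 1 − (t−3π/2)²/2). -/

import Mathlib

open Real

noncomputable def F (l t m : ℝ) : ℝ :=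
  l * (-1 + (t - 3 * π / 2) ^ 2 / 2 - (t - 3 * π / 2) ^ 4 / 24) +
    (-1 + (l * t - 3 * π / 2) ^ 2 / 2 - (l * t - 3 * π / 2) ^ 4 / 24) +
    l * (1 - l ^ 2) * (1 + 1 / (m ^ 2 - 1)) *
      (t - t ^ 3 / (6 * m ^ 2) + 1 - (t - 3 * π / 2) ^ 2 / 2)

/-
Since `1 + 1/(m² - 1) = m²/(m² - 1)`, the last summand of `F` is
`λ(1 - λ²)(c - (t³/6 - c)/(m² - 1))` with `c = t + 1 - (t - 3π/2)²/2`, and the other summands do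
not involve `m`. For `0 ≤ λ ≤ 1` the factor `λ(1 - λ²)` is nonnegative, and for `t ≥ 2.8` the
cubic `t³/6` dominates `c`, so this is nondecreasing in `m > 1`.
-/

lemma one_add_one_div_sq_sub_one_mul {m : ℝ} (hm₀ : m ≠ 0) (hm₁ : m ^ 2 ≠ 1) (c d : ℝ) :
    (1 + 1 / (m ^ 2 - 1)) * (c - d / m ^ 2) = c - (d - c) / (m ^ 2 - 1) := by
  have : m ^ 2 - 1 ≠ 0 := sub_ne_zero.mpr hm₁
  field_simp
  ring

lemma div_sq_sub_one_le_div_sq_sub_one {d m₁ m₂ : ℝ} (hd : 0 ≤ d) (hm₁ : 1 < m₁) (hm : m₁ ≤ m₂) :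
    d / (m₂ ^ 2 - 1) ≤ d / (m₁ ^ 2 - 1) := by
  have hsq : 1 < m₁ ^ 2 := one_lt_pow₀ hm₁ two_ne_zero
  gcongr

lemma add_one_sub_sq_le_cube_div_six (t : ℝ) (ht : 2.8 ≤ t) :
    t + 1 - (t - 3 * π / 2) ^ 2 / 2 ≤ t ^ 3 / 6 := by
  have hπ₁ : π < 3.15 := pi_lt_d2
  have hπ₀ : 3.141592 < π := pi_gt_d6
  have hs : 0 ≤ t - 2.8 := by linarith
  nlinarith [sq_nonneg (t - 2.8), mul_nonneg (mul_nonneg hs hs) hs, sq_nonneg (t - 3 * π / 2)]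

lemma F_sub_F {l t m₁ m₂ : ℝ} (hm₁ : 1 < m₁) (hm₂ : 1 < m₂) :
    F l t m₂ - F l t m₁ = l * (1 - l ^ 2) *
      ((t ^ 3 / 6 - (t + 1 - (t - 3 * π / 2) ^ 2 / 2)) / (m₁ ^ 2 - 1) -
        (t ^ 3 / 6 - (t + 1 - (t - 3 * π / 2) ^ 2 / 2)) / (m₂ ^ 2 - 1)) := by
  have hF (m : ℝ) (hm : 1 < m) : F l t m =
      l * (-1 + (t - 3 * π / 2) ^ 2 / 2 - (t - 3 * π / 2) ^ 4 / 24) +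
        (-1 + (l * t - 3 * π / 2) ^ 2 / 2 - (l * t - 3 * π / 2) ^ 4 / 24) +
        l * (1 - l ^ 2) * ((t + 1 - (t - 3 * π / 2) ^ 2 / 2) -
          (t ^ 3 / 6 - (t + 1 - (t - 3 * π / 2) ^ 2 / 2)) / (m ^ 2 - 1)) := by
    rw [F, ← one_add_one_div_sq_sub_one_mul (by positivity) (one_lt_pow₀ hm two_ne_zero).ne']
    ring
  rw [hF m₁ hm₁, hF m₂ hm₂]
  ring

theorem stmt_16_general (l t : ℝ) (hl0 : 0.5 ≤ l) (hl1 : l ≤ 0.8194)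
    (ht0 : 2.8 ≤ t) (m₁ m₂ : ℝ) (hm1 : 1 < m₁) (hm12 : m₁ ≤ m₂) :
    F l t m₁ ≤ F l t m₂ := by
  have hl : 0 ≤ l * (1 - l ^ 2) := mul_nonneg (by linarith) (by nlinarith)
  have hd := sub_nonneg.mpr (add_one_sub_sq_le_cube_div_six t ht0)
  rw [← sub_nonneg, F_sub_F hm1 (hm1.trans_le hm12)]
  exact mul_nonneg hl (sub_nonneg.mpr (div_sq_sub_one_le_div_sq_sub_one hd hm1 hm12))

theorem stmt_16 (l t : ℝ) (hl0 : 0.5 ≤ l) (hl1 : l ≤ 0.8194)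
    (ht0 : 2.8 ≤ t) (ht1 : t ≤ 5.78) (m₁ m₂ : ℝ) (hm1 : 1 < m₁) (hm12 : m₁ ≤ m₂) :
    F l t m₁ ≤ F l t m₂ :=
  stmt_16_general l t hl0 hl1 ht0 m₁ m₂ hm1 hm12
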